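/- There exists a constant C > 0 with the following property. Let n, d ≥ 1, h ≥ 1 and η ≥ 1 be natural numbers, and let f₁,…,fₙ ∈ ℤ[X₁,…,Xₙ] be polynomials of degree at most d, all of whose coefficients have absolute value at most 2^h, forming a regular sequence in ℚ[X₁,…,Xₙ] such that each ideal (f₁,…,f_i) of ℚ[X₁,…,Xₙ], 1 ≤ i ≤ n, is radical, and such that their common zero set V ⊂ ℂⁿ is finite of cardinality δ ≥ 1 with V ∩ ℚ(i)ⁿ = ∅. Assume the system admits a geometric solution of height at most η: there exist integers λ₁,…,λₙ, a polynomial q_u ∈ ℤ[T] of degree δ, nonzero integers ρ₁,…,ρₙ and polynomials v₁,…,vₙ ∈ ℤ[T] of degree strictly less than δ, where all the integers λ_i, ρ_i and all coefficients of q_u and of the v_i have absolute value at most 2^η, such that with U := λ₁X₁ + ⋯ + λₙXₙ the ideal (f₁,…,fₙ) of ℚ[X₁,…,Xₙ] equals (q_u(U), ρ₁X₁ − v₁(U), …, ρₙXₙ − vₙ(U)). Let q ≥ 1 be a natural number and p₁,…,pₙ Gaussian integers, set a := (p₁/q,…,pₙ/q) ∈ ℂⁿ, and suppose there exists α ∈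 V with ‖a − α‖ < 2^{−dⁿ}. Then dⁿ/(n·d·δ)^C − (h + η) ≤ log₂ q. -/

import Mathlib

/-- The norm on `ℂⁿ` associated with the standard hermitian inner product. -/
noncomputable def cnorm {n : ℕ} (x : Fin n → ℂ) : ℝ :=
  Real.sqrt (∑ k, ‖x k‖ ^ 2)

/-!
Put `L x = ∑ λᵢ xᵢ`. On `V` the geometric solution gives `q_u(L x) = 0` and `ρᵢ xᵢ = vᵢ(L x)`, so
`L` is injective on `V` and its `δ` values are all the roots of `q_u`. The point `b = L a` equals
`G / q` with `G ∈ ℤ[i]`; were `q_u(b) = 0`, then `b = L x` for some `x ∈ V`, and `x` would have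
coordinates `vᵢ(b) / ρᵢ ∈ ℚ(i)`. Hence `q^δ q_u(b)` is a nonzero Gaussian integer, so
`1 ≤ q^δ |q_u(b)|`. On the other hand `q_u(L α) = 0`, the roots of `q_u` are bounded by Cauchy's
bound, and `|b - L α| ≤ n 2^η ‖a - α‖ < 2^(n + η - dⁿ)`, so `|q_u(b)| ≤ 2^(O(nηδ) - dⁿ)`.
Comparing the two bounds gives `dⁿ ≤ δ log₂ q + O(nηδ)`, which yields the claim with `C = 6`.
-/

open Polynomial

local notation "ℤ[i]" => GaussianInt

section NormedField

variable {K : Type*} [NormedField K]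

lemma norm_pow_sub_pow_le {x y : K} {M : ℝ} (hx : ‖x‖ ≤ M) (hy : ‖y‖ ≤ M) (j : ℕ) :
    ‖x ^ j - y ^ j‖ ≤ j * M ^ (j - 1) * ‖x - y‖ := by
  have hM0 : 0 ≤ M := (norm_nonneg x).trans hx
  rw [← geom_sum₂_mul, norm_mul]
  gcongr
  calc ‖∑ i ∈ Finset.range j, x ^ i * y ^ (j - 1 - i)‖
      ≤ ∑ i ∈ Finset.range j, ‖x ^ i * y ^ (j - 1 - i)‖ := norm_sum_le _ _
    _ ≤ ∑ i ∈ Finset.range j, M ^ (j - 1) := by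
        refine Finset.sum_le_sum fun i hi => ?_
        rw [norm_mul, norm_pow, norm_pow,
          ← pow_mul_pow_sub M (by have := Finset.mem_range.mp hi; omega : i ≤ j - 1)]
        gcongr
    _ = j * M ^ (j - 1) := by simp

namespace Polynomial

lemma norm_eval_sub_eval_le {P : K[X]} {B M : ℝ} (hB : ∀ j, ‖P.coeff j‖ ≤ B) (hM : 1 ≤ M)
    {x y : K} (hx : ‖x‖ ≤ M) (hy : ‖y‖ ≤ M) :
    ‖P.eval x - P.eval y‖ ≤
      (P.natDegree + 1) * P.natDegree * B * M ^ P.natDegree * ‖x - y‖ := by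
  have hB0 : 0 ≤ B := (norm_nonneg _).trans (hB 0)
  rw [eval_eq_sum_range, eval_eq_sum_range, ← Finset.sum_sub_distrib]
  calc ‖∑ j ∈ Finset.range (P.natDegree + 1), (P.coeff j * x ^ j - P.coeff j * y ^ j)‖
      ≤ ∑ j ∈ Finset.range (P.natDegree + 1), ‖P.coeff j * x ^ j - P.coeff j * y ^ j‖ :=
        norm_sum_le _ _
    _ ≤ ∑ _j ∈ Finset.range (P.natDegree + 1),
          B * (P.natDegree * M ^ P.natDegree * ‖x - y‖) := by
        refine Finset.sum_le_sum fun j hj => ?_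
        have hj : j ≤ P.natDegree := Nat.lt_succ_iff.mp (Finset.mem_range.mp hj)
        rw [← mul_sub, norm_mul]
        calc ‖P.coeff j‖ * ‖x ^ j - y ^ j‖ ≤ B * (j * M ^ (j - 1) * ‖x - y‖) :=
              mul_le_mul (hB j) (norm_pow_sub_pow_le hx hy j) (norm_nonneg _) hB0
          _ ≤ B * (P.natDegree * M ^ P.natDegree * ‖x - y‖) := by
              gcongr
              omega
    _ = _ := by simp; ring

lemma IsRoot.norm_lt_add_one {P : K[X]} {u : K} (hu : P.IsRoot u) (hP : P ≠ 0) {B : ℝ}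
    (hB : ∀ j, ‖P.coeff j‖ ≤ B) (hlc : 1 ≤ ‖P.leadingCoeff‖) : ‖u‖ < B + 1 := by
  have hB0 : 0 ≤ B := (norm_nonneg _).trans (hB 0)
  have hsup : (Finset.range P.natDegree).sup (‖P.coeff ·‖₊) ≤ B.toNNReal :=
    Finset.sup_le fun j _ => (Real.le_toNNReal_iff_coe_le hB0).mpr (hB j)
  have hcauchy : cauchyBound P ≤ B.toNNReal + 1 := by
    unfold cauchyBound
    gcongr
    exact (div_le_self zero_le (by exact_mod_cast hlc)).trans hsup
  have := (hu.norm_lt_cauchyBound hP).trans_le hcauchy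
  rw [← NNReal.coe_lt_coe] at this
  simpa [hB0] using this

lemma IsRoot.norm_eval_le {P : K[X]} {u : K} (hu : P.IsRoot u) (hP : P ≠ 0) {B : ℝ}
    (hB : ∀ j, ‖P.coeff j‖ ≤ B) (hlc : 1 ≤ ‖P.leadingCoeff‖) (x : K) :
    ‖P.eval x‖ ≤
      (P.natDegree + 1) * P.natDegree * B * (B + 1 + ‖x - u‖) ^ P.natDegree * ‖x - u‖ := by
  have hB0 : 0 ≤ B := (norm_nonneg _).trans (hB 0)
  have hu' : ‖u‖ < B + 1 := hu.norm_lt_add_one hP hB hlc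
  have hx : ‖x‖ ≤ B + 1 + ‖x - u‖ := by
    linarith [norm_le_norm_add_norm_sub' x u]
  have := norm_eval_sub_eval_le hB (by linarith [norm_nonneg (x - u)]) hx
    (y := u) (by linarith [norm_nonneg (x - u)])
  rwa [hu.eq_zero, sub_zero] at this

end Polynomial

end NormedField

lemma Polynomial.exists_eq_of_injOn_of_aeval_eq_zero {α R K : Type*} [CommRing R] [IsDomain R]
    [CommRing K] [IsDomain K] [Algebra R K] [Module.IsTorsionFree R K] {P : R[X]} (hP : P ≠ 0)
    {V : Set α} (hV : V.Finite) {L : α → K} (hL : V.InjOn L)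
    (hroot : ∀ x ∈ V, aeval (L x) P = 0) (hdeg : P.natDegree ≤ V.ncard) {y : K}
    (hy : aeval y P = 0) : ∃ x ∈ V, L x = y := by
  classical
  by_contra! hne
  have hsub : insert y (hV.toFinset.image L) ⊆ (P.aroots K).toFinset := by
    intro z hz
    rw [Multiset.mem_toFinset, mem_aroots]
    rcases Finset.mem_insert.mp hz with rfl | hz
    · exact ⟨hP, hy⟩
    · obtain ⟨x, hx, rfl⟩ := Finset.mem_image.mp hz
      exact ⟨hP, hroot x (hV.mem_toFinset.mp hx)⟩
  have hcard : (insert y (hV.toFinset.image L)).card = V.ncard + 1 := by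
    rw [Finset.card_insert_of_notMem, Finset.card_image_of_injOn,
      Set.ncard_eq_toFinset_card V hV]
    · simpa using hL
    · simpa using hne
  have := (Finset.card_le_card hsub).trans ((Multiset.toFinset_card_le _).trans
    ((card_roots' _).trans natDegree_map_le))
  omega

namespace GaussianInt

lemma one_le_norm_toComplex {g : ℤ[i]} (hg : g ≠ 0) : 1 ≤ ‖(g : ℂ)‖ := by
  have h1 : (1 : ℝ) ≤ ‖(g : ℂ)‖ ^ 2 := by
    rw [Complex.sq_norm, ← intCast_real_norm]
    exact_mod_cast norm_pos.mpr hg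
  nlinarith [_root_.norm_nonneg (g : ℂ)]

lemma exists_natCast_pow_mul_aeval_div_eq (P : ℤ[X]) (g : ℤ[i]) {q : ℕ} (hq : q ≠ 0) :
    ∃ g' : ℤ[i], (q : ℂ) ^ P.natDegree * aeval ((g : ℂ) / q) P = g' := by
  refine ⟨aeval g (P.scaleRoots (q : ℤ)), ?_⟩
  change _ = toComplex.toIntAlgHom (aeval g _)
  rw [← aeval_algHom_apply toComplex.toIntAlgHom, aeval_def, aeval_def, algebraMap_int_eq]
  have hg : (toComplex.toIntAlgHom g : ℂ) = Int.castRingHom ℂ (q : ℤ) * ((g : ℂ) / q) := by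
    simp [mul_div_cancel₀ _ (Nat.cast_ne_zero.mpr hq : (q : ℂ) ≠ 0)]
  rw [hg, scaleRoots_eval₂_mul]
  simp

lemma one_le_pow_mul_norm_aeval_div (P : ℤ[X]) (g : ℤ[i]) {q : ℕ} (hq : q ≠ 0)
    (hne : aeval ((g : ℂ) / q) P ≠ 0) :
    1 ≤ (q : ℝ) ^ P.natDegree * ‖aeval ((g : ℂ) / q) P‖ := by
  obtain ⟨g', hg'⟩ := exists_natCast_pow_mul_aeval_div_eq P g hq
  have hg'0 : g' ≠ 0 := by
    rintro rfl
    simp [hq, hne] at hg'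
  simpa [← hg'] using one_le_norm_toComplex hg'0

lemma exists_rat_eq_of_mul_eq_aeval_div (P : ℤ[X]) (g : ℤ[i]) {q : ℕ} (hq : q ≠ 0)
    {c : ℤ} (hc : c ≠ 0) {x : ℂ} (hx : c * x = aeval ((g : ℂ) / q) P) :
    ∃ u w : ℚ, x = u + w * Complex.I := by
  obtain ⟨g', hg'⟩ := exists_natCast_pow_mul_aeval_div_eq P g hq
  set N : ℤ := c * q ^ P.natDegree
  have hN : (N : ℂ) ≠ 0 := by simp [N, hc, hq]
  have hNx : (N : ℂ) * x = g'.re + g'.im * Complex.I := by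
    rw [← toComplex_def, ← hg', ← hx]
    push_cast [N]
    ring
  refine ⟨g'.re / N, g'.im / N, ?_⟩
  rw [eq_div_of_mul_eq hN ((mul_comm x _).trans hNx)]
  push_cast
  ring

lemma exists_sum_intCast_mul_div_eq {ι : Type*} [Fintype ι] (lam : ι → ℤ) {p : ι → ℂ}
    (hp : ∀ k, ∃ u w : ℤ, p k = u + w * Complex.I) (q : ℂ) :
    ∃ G : ℤ[i], ∑ i, (lam i : ℂ) * (p i / q) = G / q := by
  choose u w hp using hp
  refine ⟨∑ i, (lam i : ℤ[i]) * ⟨u i, w i⟩, ?_⟩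
  simp only [map_sum, map_mul, map_intCast, toComplex_def', hp, Finset.sum_div]
  exact Finset.sum_congr rfl fun i _ => by ring

end GaussianInt

lemma lipschitz_constant_mul_le_two_pow {δ η k : ℕ} {D ε : ℝ} (hD0 : 0 ≤ D)
    (hD : D ≤ 2 ^ k * ε) (hε : ε ≤ 1) :
    ((δ : ℝ) + 1) * δ * 2 ^ η * (2 ^ η + 1 + D) ^ δ * D ≤
      (2 ^ (k + η + 2)) ^ (2 * δ + 2) * ε := by
  have hT : (2 : ℝ) ^ (k + η + 2) = 4 * 2 ^ (k + η) := by ring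
  set T : ℝ := 2 ^ (k + η + 2)
  have hk : (2 : ℝ) ^ k ≤ 2 ^ (k + η) := pow_le_pow_right₀ one_le_two (by omega)
  have hη : (2 : ℝ) ^ η ≤ 2 ^ (k + η) := pow_le_pow_right₀ one_le_two (by omega)
  have h1 : (1 : ℝ) ≤ 2 ^ (k + η) := one_le_pow₀ one_le_two
  have hε0 : 0 ≤ ε := nonneg_of_mul_nonneg_right (hD0.trans hD) (by positivity)
  have hδ : ((δ : ℝ) + 1) * δ ≤ T ^ δ := by
    have h1 : (δ : ℝ) + 1 ≤ 2 ^ δ := by exact_mod_cast Nat.lt_two_pow_self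
    calc ((δ : ℝ) + 1) * δ ≤ 2 ^ δ * 2 ^ δ := by gcongr; linarith
      _ = 4 ^ δ := by rw [← mul_pow]; norm_num
      _ ≤ T ^ δ := by gcongr; linarith
  calc ((δ : ℝ) + 1) * δ * 2 ^ η * (2 ^ η + 1 + D) ^ δ * D
      ≤ T ^ δ * T * T ^ δ * (T * ε) := by
        gcongr
        · linarith
        · nlinarith
        · nlinarith
    _ = T ^ (2 * δ + 2) * ε := by ring

lemma Polynomial.norm_aeval_le_of_aeval_eq_zero {P : ℤ[X]} (hP0 : P ≠ 0) {η : ℕ}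
    (hP : ∀ j, |P.coeff j| ≤ 2 ^ η) {u : ℂ} (hu : aeval u P = 0) {x : ℂ} {k : ℕ} {ε : ℝ}
    (hx : ‖x - u‖ ≤ 2 ^ k * ε) (hε : ε ≤ 1) :
    ‖aeval x P‖ ≤ 2 ^ ((k + η + 2) * (2 * P.natDegree + 2)) * ε := by
  set Q := P.map (Int.castRingHom ℂ)
  have heval : ∀ y, aeval y P = Q.eval y := fun y => by
    rw [← eval_map_algebraMap, algebraMap_int_eq]
  have hinj := (Int.castRingHom ℂ).injective_int
  have hQcoeff : ∀ j, ‖Q.coeff j‖ ≤ 2 ^ η := fun j => by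
    rw [coeff_map, eq_intCast, Complex.norm_intCast]
    exact_mod_cast hP j
  have hQlc : 1 ≤ ‖Q.leadingCoeff‖ := by
    rw [leadingCoeff_map_of_injective hinj, eq_intCast, Complex.norm_intCast]
    exact_mod_cast Int.one_le_abs (leadingCoeff_ne_zero.mpr hP0)
  have hQu : Q.IsRoot u := by rw [IsRoot, ← heval, hu]
  have := hQu.norm_eval_le ((Polynomial.map_ne_zero_iff hinj).mpr hP0) hQcoeff hQlc x
  rw [natDegree_map_eq_of_injective hinj, ← heval] at this
  rw [pow_mul]
  exact this.trans (lipschitz_constant_mul_le_two_pow (norm_nonneg _) hx hε)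

lemma GaussianInt.le_mul_logb_add_of_norm_div_sub_le {P : ℤ[X]} {η : ℕ}
    (hP : ∀ j, |P.coeff j| ≤ 2 ^ η) {u : ℂ} (hu : aeval u P = 0) (g : ℤ[i]) {q : ℕ}
    (hq : q ≠ 0) (hne : aeval ((g : ℂ) / q) P ≠ 0) {k m : ℕ}
    (hclose : ‖(g : ℂ) / q - u‖ ≤ 2 ^ k * ((2 : ℝ) ^ m)⁻¹) :
    (m : ℝ) ≤ P.natDegree * Real.logb 2 q + (k + η + 2) * (2 * P.natDegree + 2) := by
  have hP0 : P ≠ 0 := by rintro rfl; simp at hne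
  have hlower := one_le_pow_mul_norm_aeval_div P g hq hne
  have hupper := P.norm_aeval_le_of_aeval_eq_zero hP0 hP hu hclose
    (inv_le_one_of_one_le₀ (one_le_pow₀ one_le_two))
  have hpow : (2 : ℝ) ^ m ≤
      (q : ℝ) ^ P.natDegree * 2 ^ ((k + η + 2) * (2 * P.natDegree + 2)) := by
    have := hlower.trans (mul_le_mul_of_nonneg_left hupper (by positivity))
    rwa [← mul_assoc, le_mul_inv_iff₀ (by positivity), one_mul] at this
  have hq0 : (0 : ℝ) < q := by positivity
  have := Real.logb_le_logb_of_le one_lt_two (by positivity) hpow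
  rw [Real.logb_mul (by positivity) (by positivity), Real.logb_pow, Real.logb_pow,
    Real.logb_pow, Real.logb_self_eq_one one_lt_two] at this
  push_cast at this
  linarith

lemma norm_le_cnorm {n : ℕ} (x : Fin n → ℂ) (k : Fin n) : ‖x k‖ ≤ cnorm x :=
  Real.le_sqrt_of_sq_le (Finset.single_le_sum (f := fun j => ‖x j‖ ^ 2)
    (fun _ _ => sq_nonneg _) (Finset.mem_univ k))

lemma norm_sum_mul_sub_sum_mul_le {n η : ℕ} {lam : Fin n → ℤ} (hlam : ∀ i, |lam i| ≤ 2 ^ η)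
    (x y : Fin n → ℂ) :
    ‖∑ i, (lam i : ℂ) * x i - ∑ i, (lam i : ℂ) * y i‖ ≤ 2 ^ (n + η) * cnorm (x - y) := by
  have hlam' : ∀ i, ‖(lam i : ℂ)‖ ≤ 2 ^ η := fun i => by
    rw [Complex.norm_intCast]; exact_mod_cast hlam i
  have hn : (n : ℝ) ≤ 2 ^ n := by exact_mod_cast Nat.lt_two_pow_self.le
  rw [← Finset.sum_sub_distrib]
  calc ‖∑ i, ((lam i : ℂ) * x i - (lam i : ℂ) * y i)‖
      ≤ ∑ i, ‖(lam i : ℂ) * (x - y) i‖ := by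
        simp only [Pi.sub_apply, mul_sub]; exact norm_sum_le _ _
    _ ≤ ∑ _i : Fin n, 2 ^ η * cnorm (x - y) := Finset.sum_le_sum fun i _ => by
        rw [norm_mul]
        exact mul_le_mul (hlam' i) (norm_le_cnorm _ i) (norm_nonneg _) (by positivity)
    _ = n * 2 ^ η * cnorm (x - y) := by simp [mul_assoc]
    _ ≤ 2 ^ (n + η) * cnorm (x - y) := by
        rw [pow_add]; gcongr; exact Real.sqrt_nonneg _

lemma aeval_geometricSolution {ι σ : Type*} [Fintype σ] (f : ι → MvPolynomial σ ℤ)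
    (lam ρ : σ → ℤ) (qu : ℤ[X]) (v : σ → ℤ[X])
    (hI : Ideal.span (Set.range fun i => MvPolynomial.map (Int.castRingHom ℚ) (f i)) =
      Ideal.span
        ({Polynomial.aeval (∑ i, MvPolynomial.C ((lam i : ℚ)) * MvPolynomial.X i)
            (Polynomial.map (Int.castRingHom ℚ) qu)} ∪
          Set.range fun i =>
            MvPolynomial.C ((ρ i : ℚ)) * MvPolynomial.X i -
              Polynomial.aeval (∑ j, MvPolynomial.C ((lam j : ℚ)) * MvPolynomial.X j)
                (Polynomial.map (Int.castRingHom ℚ) (v i))))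
    {x : σ → ℂ} (hx : ∀ i, MvPolynomial.aeval x (f i) = 0) :
    aeval (∑ i, (lam i : ℂ) * x i) qu = 0 ∧
      ∀ i, (ρ i : ℂ) * x i = aeval (∑ j, (lam j : ℂ) * x j) (v i) := by
  set φ : MvPolynomial σ ℚ →ₐ[ℚ] ℂ := MvPolynomial.aeval x
  have hker : Ideal.span (Set.range fun i => MvPolynomial.map (Int.castRingHom ℚ) (f i)) ≤
      RingHom.ker φ := by
    rw [Ideal.span_le]
    rintro _ ⟨i, rfl⟩
    rw [SetLike.mem_coe, RingHom.mem_ker, ← algebraMap_int_eq, MvPolynomial.aeval_map_algebraMap]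
    exact hx i
  rw [hI] at hker
  set U : MvPolynomial σ ℚ := ∑ i, MvPolynomial.C ((lam i : ℚ)) * MvPolynomial.X i
  have hcomp : ∀ P : ℤ[X], φ (Polynomial.aeval U (P.map (Int.castRingHom ℚ))) =
      aeval (∑ i, (lam i : ℂ) * x i) P := fun P => by
    rw [← aeval_algHom_apply, ← algebraMap_int_eq, aeval_map_algebraMap]
    simp [φ, U]
  refine ⟨?_, fun i => ?_⟩
  · rw [← hcomp]
    exact hker (Ideal.subset_span (Set.mem_union_left _ rfl))
  · have := RingHom.mem_ker.mp (hker (Ideal.subset_span (Set.mem_union_right _ ⟨i, rfl⟩)))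
    rw [map_sub, hcomp, sub_eq_zero] at this
    simpa [φ] using this

lemma div_pow_sub_le_of_le_mul_add {n d δ h η : ℕ} (hn : 1 ≤ n) (hd : 1 ≤ d) (hδ : 1 ≤ δ)
    (hη : 1 ≤ η) {ℓ : ℝ} (hℓ : 0 ≤ ℓ)
    (hm : ((d ^ n : ℕ) : ℝ) ≤ δ * ℓ + (((n + η : ℕ) : ℝ) + η + 2) * (2 * δ + 2)) :
    ((d ^ n : ℕ) : ℝ) / ((n * d * δ : ℕ) : ℝ) ^ 6 - ((h : ℝ) + η) ≤ ℓ := by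
  have hη' : (1 : ℝ) ≤ η := by exact_mod_cast hη
  have hN1 : (1 : ℝ) ≤ ((n * d * δ : ℕ) : ℝ) := by
    exact_mod_cast Nat.one_le_iff_ne_zero.mpr (by positivity)
  rcases hd.eq_or_lt with rfl | hd2
  · have : ((1 ^ n : ℕ) : ℝ) / ((n * 1 * δ : ℕ) : ℝ) ^ 6 ≤ 1 := by
      rw [one_pow, Nat.cast_one]
      exact div_le_one_of_le₀ (one_le_pow₀ hN1) (by positivity)
    linarith [(h.cast_nonneg : (0 : ℝ) ≤ h)]
  set N : ℝ := ((n * d * δ : ℕ) : ℝ) with hNdef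
  have hn' : (1 : ℝ) ≤ n := by exact_mod_cast hn
  have hδ' : (1 : ℝ) ≤ δ := by exact_mod_cast hδ
  have hN : 2 * n * δ ≤ N := by
    have : 2 * n * δ ≤ n * d * δ := by
      rw [mul_comm 2 n]; exact Nat.mul_le_mul_right δ (Nat.mul_le_mul_left n hd2)
    rw [hNdef]
    exact_mod_cast this
  have hN5 : (32 : ℝ) ≤ N ^ 5 := by
    calc (32 : ℝ) = 2 ^ 5 := by norm_num
      _ ≤ N ^ 5 := by gcongr; nlinarith
  have hN6 : 64 * n * δ ≤ N ^ 6 := by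
    calc 64 * (n : ℝ) * δ = 32 * (2 * n * δ) := by ring
      _ ≤ N ^ 5 * N := by gcongr
      _ = N ^ 6 := by ring
  have hK : (((n + η : ℕ) : ℝ) + η + 2) * (2 * δ + 2) ≤ 64 * n * δ * η := by
    have h1 : ((n : ℝ) + η + η + 2) ≤ 16 * n * η := by nlinarith
    have h2 : (2 * δ + 2 : ℝ) ≤ 4 * δ := by linarith
    push_cast
    calc ((n : ℝ) + η + η + 2) * (2 * δ + 2) ≤ (16 * n * η) * (4 * δ) := by gcongr
      _ = 64 * n * δ * η := by ring
  rw [sub_le_iff_le_add, div_le_iff₀ (by positivity)]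
  calc ((d ^ n : ℕ) : ℝ) ≤ δ * ℓ + 64 * n * δ * η := hm.trans (by linarith)
    _ ≤ N ^ 6 * ℓ + N ^ 6 * η := by
        gcongr
        nlinarith
    _ ≤ (ℓ + (h + η)) * N ^ 6 := by
        nlinarith [(h.cast_nonneg : (0 : ℝ) ≤ h), pow_pos (by linarith : (0 : ℝ) < N) 6]

/-- Exponential lower bound for the Bézout approximation
level.  There is a universal constant `C > 0` such that for any smooth
regular sequence `f₁, …, fₙ ∈ ℤ[X₁,…,Xₙ]` of degree at most `d` and height
at most `h`, whose zero set `V ⊂ ℂⁿ` is finite of cardinality `δ ≥ 1` and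
avoids `ℚ(i)ⁿ`, admitting a geometric solution of height at most `η`, and for
any rational approximation `a = (p₁/q, …, pₙ/q)` with `‖a − α‖ < 2^{−dⁿ}` for
some `α ∈ V`, one has `dⁿ/(n·d·δ)^C − (h + η) ≤ log₂ q`. -/
theorem statement_7 :
    ∃ C : ℕ, 0 < C ∧
      ∀ (n d h η δ : ℕ), 1 ≤ n → 1 ≤ d → 1 ≤ h → 1 ≤ η → 1 ≤ δ →
      ∀ f : Fin n → MvPolynomial (Fin n) ℤ,
      -- degrees at most `d`:
      (∀ i, (f i).totalDegree ≤ d) →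
      -- heights at most `h`:
      (∀ i m, |MvPolynomial.coeff m (f i)| ≤ 2 ^ h) →
      -- `f₁, …, fₙ` is a regular sequence in `ℚ[X₁,…,Xₙ]`:
      (∀ i : Fin n, ∀ g : MvPolynomial (Fin n) ℚ,
        g * MvPolynomial.map (Int.castRingHom ℚ) (f i) ∈
          Ideal.span ((fun j : Fin n => MvPolynomial.map (Int.castRingHom ℚ) (f j)) ''
            {j | j < i}) →
        g ∈ Ideal.span ((fun j : Fin n => MvPolynomial.map (Int.castRingHom ℚ) (f j)) ''
            {j | j < i})) →
      -- each ideal `(f₁, …, f_i)` of `ℚ[X₁,…,Xₙ]` is radical: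
      (∀ i : Fin n,
        (Ideal.span ((fun j : Fin n => MvPolynomial.map (Int.castRingHom ℚ) (f j)) ''
          {j | j ≤ i})).IsRadical) →
      -- the common zero set `V` is finite of cardinality `δ`:
      {x : Fin n → ℂ | ∀ i, MvPolynomial.aeval x (f i) = 0}.Finite →
      {x : Fin n → ℂ | ∀ i, MvPolynomial.aeval x (f i) = 0}.ncard = δ →
      -- `V ∩ ℚ(i)ⁿ = ∅`:
      (∀ x ∈ {x : Fin n → ℂ | ∀ i, MvPolynomial.aeval x (f i) = 0},
        ¬ ∀ k, ∃ u w : ℚ, x k = (u : ℂ) + (w : ℂ) * Complex.I) →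
      -- geometric solution of height at most `η`:
      ∀ (lam ρ : Fin n → ℤ) (qu : Polynomial ℤ) (v : Fin n → Polynomial ℤ),
      (∀ i, ρ i ≠ 0) →
      qu.natDegree = δ →
      (∀ i, (v i).natDegree < δ) →
      (∀ i, |lam i| ≤ 2 ^ η) →
      (∀ i, |ρ i| ≤ 2 ^ η) →
      (∀ j, |qu.coeff j| ≤ 2 ^ η) →
      (∀ i j, |(v i).coeff j| ≤ 2 ^ η) →
      Ideal.span (Set.range fun i => MvPolynomial.map (Int.castRingHom ℚ) (f i)) =
        Ideal.span
          ({Polynomial.aeval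
              (∑ i, MvPolynomial.C ((lam i : ℚ)) * MvPolynomial.X i)
              (Polynomial.map (Int.castRingHom ℚ) qu)} ∪
            Set.range fun i =>
              MvPolynomial.C ((ρ i : ℚ)) * MvPolynomial.X i -
                Polynomial.aeval
                  (∑ j, MvPolynomial.C ((lam j : ℚ)) * MvPolynomial.X j)
                  (Polynomial.map (Int.castRingHom ℚ) (v i))) →
      -- rational approximation data:
      ∀ q : ℕ, 1 ≤ q →
      ∀ p : Fin n → ℂ, (∀ k, ∃ u w : ℤ, p k = (u : ℂ) + (w : ℂ) * Complex.I) →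
      (∃ α ∈ {x : Fin n → ℂ | ∀ i, MvPolynomial.aeval x (f i) = 0},
        cnorm ((fun k => p k / (q : ℂ)) - α) < ((2 : ℝ) ^ (d ^ n))⁻¹) →
      ((d ^ n : ℕ) : ℝ) / ((n * d * δ : ℕ) : ℝ) ^ C - ((h : ℝ) + (η : ℝ)) ≤
        Real.logb 2 (q : ℝ) := by
  refine ⟨6, by norm_num, ?_⟩
  intro n d h η δ hn hd _ hη hδ f _ _ _ _ hfin hcard hirr lam ρ qu v hρ hqud _ hlam _ hqub _
    hIdeal q hq p hp happ
  obtain ⟨α, hαV, hclose⟩ := happ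
  set V := {x : Fin n → ℂ | ∀ i, MvPolynomial.aeval x (f i) = 0}
  set L : (Fin n → ℂ) → ℂ := fun x => ∑ i, (lam i : ℂ) * x i
  have hgeo : ∀ x ∈ V, aeval (L x) qu = 0 ∧ ∀ i, (ρ i : ℂ) * x i = aeval (L x) (v i) :=
    fun x hx => aeval_geometricSolution f lam ρ qu v hIdeal hx
  have hLinj : V.InjOn L := fun x hx y hy hxy => funext fun i =>
    mul_left_cancel₀ (Int.cast_ne_zero.mpr (hρ i)) (by rw [(hgeo x hx).2, (hgeo y hy).2, hxy])
  have hq0 : q ≠ 0 := by omega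
  obtain ⟨G, hG⟩ := GaussianInt.exists_sum_intCast_mul_div_eq lam hp (q : ℂ)
  have hne : aeval ((G : ℂ) / q) qu ≠ 0 := by
    intro h0
    obtain ⟨x, hxV, hx⟩ := exists_eq_of_injOn_of_aeval_eq_zero (by rintro rfl; simp at hqud; omega)
      hfin hLinj (fun x hx => (hgeo x hx).1) (by rw [hqud, hcard]) h0
    exact hirr x hxV fun k => GaussianInt.exists_rat_eq_of_mul_eq_aeval_div (v k) G hq0 (hρ k)
      (hx ▸ (hgeo x hxV).2 k)
  have hclose' : ‖(G : ℂ) / q - L α‖ ≤ 2 ^ (n + η) * ((2 : ℝ) ^ (d ^ n))⁻¹ := by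
    rw [← hG]
    exact (norm_sum_mul_sub_sum_mul_le hlam _ α).trans (by gcongr)
  have hlog := GaussianInt.le_mul_logb_add_of_norm_div_sub_le hqub (hgeo α hαV).1 G hq0 hne hclose'
  rw [hqud] at hlog
  exact div_pow_sub_le_of_le_mul_add hn hd hδ hη
    (Real.logb_nonneg one_lt_two (by exact_mod_cast hq)) hlog
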